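/- Let v, ṽ and z be elements of the degree-2 part of F and let β, γ ∈ ℂ. Then in H_v the identity (z + β·y)·((z + β·y) + (ṽ + γ·y)) = 0 holds if and only if z·(z + ṽ) = 0 in F and β·(β + γ)·v = β·ṽ + (2β + γ)·z. -/

import Mathlib

/-!
In `H_v = F[y]/(y² + v y)` every element is uniquely `a + b y` with `a, b ∈ F`, and
`(a + b y)(c + d y) = a c + (a d + b c - b d v) y` because `y² = -v y`. Expanding the product
with `a = z`, `b = β`, `c = z + ṽ`, `d = β + γ` and comparing the two coordinates with `0`
gives the two conditions.
-/

noncomputable section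

open MvPolynomial

/-- The relations ideal for the cohomology of the flag manifold `SU(3)/T`. -/
def Frel : Ideal (MvPolynomial (Fin 2) ℂ) :=
  Ideal.span {X 0 ^ 2 + X 1 ^ 2 + X 0 * X 1, X 0 ^ 2 * X 1 + X 0 * X 1 ^ 2}

/-- `F = ℂ[x₁,x₂]/(x₁²+x₂²+x₁x₂, x₁²x₂+x₁x₂²)`. -/
abbrev F := MvPolynomial (Fin 2) ℂ ⧸ Frel

def x₁ : F := Ideal.Quotient.mk Frel (X 0)
def x₂ : F := Ideal.Quotient.mk Frel (X 1)

/-- The degree-2 part of `F`. -/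
def deg2F : Submodule ℂ F := Submodule.span ℂ {x₁, x₂}

/-- The relations ideal for `H_u = F[y]/(y² + u·y)`. -/
def Hrel (u : F) : Ideal (Polynomial F) :=
  Ideal.span {Polynomial.X ^ 2 + Polynomial.C u * Polynomial.X}

instance Hrel_isTwoSided (u : F) : (Hrel u).IsTwoSided :=
  ⟨fun b ha ↦ mul_comm b _ ▸ (Hrel u).smul_mem _ ha⟩

/-- `H_u = F[y]/(y² + u·y)`. -/
abbrev H (u : F) := Polynomial F ⧸ Hrel u

/-- The class `y` in `H_u`. -/
def yH (u : F) : H u := Ideal.Quotient.mk (Hrel u) Polynomial.X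

/-- The canonical map `F → H_u`, as a `ℂ`-algebra homomorphism. -/
def ιH (u : F) : F →ₐ[ℂ] H u :=
  (Ideal.Quotient.mkₐ ℂ (Hrel u)).comp (IsScalarTower.toAlgHom ℂ F (Polynomial F))

/-- The degree-2 part of `H_u`. -/
def deg2H (u : F) : Submodule ℂ (H u) :=
  Submodule.span ℂ {ιH u x₁, ιH u x₂, yH u}

/-- `ω` acts on degree 2 by the matrix `(a₁₁ a₁₂; a₂₁ a₂₂)`. -/
def actsAs (ω : F ≃ₐ[ℂ] F) (a₁₁ a₁₂ a₂₁ a₂₂ : ℂ) : Prop :=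
  ω x₁ = a₁₁ • x₁ + a₂₁ • x₂ ∧ ω x₂ = a₁₂ • x₁ + a₂₂ • x₂

/-- Membership in the Weyl group `W` (the six listed automorphisms). -/
def InW (ω : F ≃ₐ[ℂ] F) : Prop :=
  actsAs ω 1 0 0 1 ∨ actsAs ω 0 1 1 0 ∨ actsAs ω (-1) 0 (-1) 1 ∨
    actsAs ω 1 (-1) 0 (-1) ∨ actsAs ω 0 (-1) 1 (-1) ∨ actsAs ω (-1) 1 (-1) 0

theorem AdjoinRoot.mk_eq_zero_iff_of_degree_lt {R : Type*} [CommRing R] {f g : Polynomial R}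
    (hf : f.Monic) (hg : g.degree < f.degree) : AdjoinRoot.mk f g = 0 ↔ g = 0 :=
  ⟨fun h => by_contra fun h0 => AdjoinRoot.mk_ne_zero_of_degree_lt hf h0 hg h,
    fun h => h ▸ map_zero _⟩

namespace Polynomial

theorem C_add_C_mul_X_eq_zero {R : Type*} [Semiring R] {a b : R} :
    C a + C b * X = 0 ↔ a = 0 ∧ b = 0 := by
  refine ⟨fun h => ⟨?_, ?_⟩, fun ⟨ha, hb⟩ => by simp [ha, hb]⟩
  · simpa using congrArg (coeff · 0) h
  · simpa using congrArg (coeff · 1) h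

variable {R : Type*} [CommRing R] (u : R)

theorem monic_X_sq_add_C_mul_X : (X ^ 2 + C u * X).Monic := by
  monicity!

theorem degree_X_sq_add_C_mul_X [Nontrivial R] : (X ^ 2 + C u * X).degree = 2 := by
  compute_degree!

end Polynomial

namespace AdjoinRoot

variable {R : Type*} [CommRing R] (u : R)

theorem root_sq_add_of_mul_root :
    root (Polynomial.X ^ 2 + Polynomial.C u * Polynomial.X) ^ 2 + of _ u * root _ = 0 := by
  have h := mk_self (f := Polynomial.X ^ 2 + Polynomial.C u * Polynomial.X)
  rwa [map_add, map_mul, map_pow, mk_X, mk_C] at h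

theorem of_add_of_mul_root_mul (a b c d : R) :
    (of (Polynomial.X ^ 2 + Polynomial.C u * Polynomial.X) a + of _ b * root _) *
        (of _ c + of _ d * root _) =
      of _ (a * c) + of _ (a * d + b * c - b * d * u) * root _ := by
  simp only [map_add, map_mul, map_sub]
  linear_combination of _ b * of _ d * root_sq_add_of_mul_root u

theorem of_add_of_mul_root_eq_zero_iff (a b : R) :
    of (Polynomial.X ^ 2 + Polynomial.C u * Polynomial.X) a + of _ b * root _ = 0 ↔
      a = 0 ∧ b = 0 := by
  rcases subsingleton_or_nontrivial R with hR | hR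
  · simp [Subsingleton.elim a 0, Subsingleton.elim b 0]
  have hdeg : (Polynomial.C a + Polynomial.C b * Polynomial.X).degree <
      (Polynomial.X ^ 2 + Polynomial.C u * Polynomial.X).degree := by
    rw [Polynomial.degree_X_sq_add_C_mul_X, add_comm]
    exact Polynomial.degree_linear_lt
  exact (mk_eq_zero_iff_of_degree_lt (Polynomial.monic_X_sq_add_C_mul_X u) hdeg).trans
    Polynomial.C_add_C_mul_X_eq_zero

end AdjoinRoot

/-- The `ℂ`-action on `F` found by instance search is the quotient-module one, which
`Algebra.smul_def` does not match syntactically. -/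
theorem smul_eq_algebraMap_mul (c : ℂ) (w : F) : c • w = algebraMap ℂ F c * w :=
  Algebra.smul_def c w

theorem smul_yH (u : F) (c : ℂ) : c • yH u = ιH u (algebraMap ℂ F c) * yH u := by
  rw [Algebra.smul_def, AlgHom.commutes]

-- `H u` is by definition `AdjoinRoot (X ^ 2 + C u * X)`, a commutative ring in which `ring`
-- works; instance search does not find a `CommRing` structure on `H u` itself.
theorem ιH_add_ιH_mul_yH_mul (u a b c d : F) :
    (ιH u a + ιH u b * yH u) * (ιH u c + ιH u d * yH u) =
      ιH u (a * c) + ιH u (a * d + b * c - b * d * u) * yH u :=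
  AdjoinRoot.of_add_of_mul_root_mul u a b c d

theorem ιH_add_ιH_mul_yH_eq_zero_iff (u a b : F) :
    ιH u a + ιH u b * yH u = 0 ↔ a = 0 ∧ b = 0 :=
  AdjoinRoot.of_add_of_mul_root_eq_zero_iff u a b

theorem stmt18_general (v vt z : F)
    (β γ : ℂ) :
    (ιH v z + β • yH v) * ((ιH v z + β • yH v) + (ιH v vt + γ • yH v)) = 0 ↔
      (z * (z + vt) = 0 ∧ (β * (β + γ)) • v = β • vt + (2 * β + γ) • z) := by
  have sum_eq : ιH v z + β • yH v + (ιH v vt + γ • yH v) =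
      ιH v (z + vt) + ιH v (algebraMap ℂ F (β + γ)) * yH v := by
    rw [smul_yH, smul_yH, add_add_add_comm, map_add, map_add, map_add, add_mul]
  rw [sum_eq, smul_yH, ιH_add_ιH_mul_yH_mul, ιH_add_ιH_mul_yH_eq_zero_iff, sub_eq_zero]
  simp only [smul_eq_algebraMap_mul, map_add, map_mul, map_ofNat]
  exact and_congr_right fun _ =>
    ⟨fun h => by linear_combination -h, fun h => by linear_combination -h⟩

/-- For `v, ṽ, z` in the degree-2 part of `F` and `β, γ ∈ ℂ`, the
identity `(z + β·y)·((z + β·y) + (ṽ + γ·y)) = 0` holds in `H_v` if and only if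
`z·(z + ṽ) = 0` in `F` and `β·(β + γ)·v = β·ṽ + (2β + γ)·z`. -/
theorem stmt18 (v vt z : F) (hv : v ∈ deg2F) (hvt : vt ∈ deg2F) (hz : z ∈ deg2F)
    (β γ : ℂ) :
    (ιH v z + β • yH v) * ((ιH v z + β • yH v) + (ιH v vt + γ • yH v)) = 0 ↔
      (z * (z + vt) = 0 ∧ (β * (β + γ)) • v = β • vt + (2 * β + γ) • z) :=
  stmt18_general v vt z β γ
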